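/- Let P be row-stochastic and diagonalizable over C, d_μ > 0, λ ∈ [0,1), β, γ ∈ (0,1), and define P^{λ,b} = I - (I-λbP)^{-1}(I-bP) for b ∈ {β,γ}, m^T = d_μ^T(I-P^{λ,β})^{-1}, and T^{(λ)}(v) = (I-γλP)^{-1}R + P^{λ,γ}v. If β ≥ γ then ‖T^{(λ)}v_1 - T^{(λ)}v_2‖_m² ≤ (γ²(1+λβ)²(1-λ))/(β(1+γλ)²(1-λβ)) · ‖v_1 - v_2‖_m². -/
import Mathlib
open Matrix Finset

section aux
variable {S : Type*} [Fintype S] [DecidableEq S]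

lemma aux_pow_nonneg (P : Matrix S S ℝ) (hP0 : ∀ s s', 0 ≤ P s s') (n : ℕ) (i j : S) :
    0 ≤ (P ^ n) i j := by
  induction n generalizing i j with
  | zero => simp [Matrix.one_apply]; positivity
  | succ n ih =>
    rw [pow_succ, Matrix.mul_apply]
    exact Finset.sum_nonneg fun k _ => mul_nonneg (ih i k) (hP0 k j)

lemma aux_pow_rowsum (P : Matrix S S ℝ) (hP1 : ∀ s, ∑ s', P s s' = 1) (n : ℕ) (i : S) :
    ∑ j, (P ^ n) i j = 1 := by
  induction n generalizing i with
  | zero => simp [Matrix.one_apply]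
  | succ n ih =>
    simp only [pow_succ, Matrix.mul_apply]
    rw [Finset.sum_comm]
    simp_rw [← Finset.mul_sum, hP1]
    simpa using ih i

lemma aux_unit_det (P : Matrix S S ℝ) (hP0 : ∀ s s', 0 ≤ P s s')
    (hP1 : ∀ s, ∑ s', P s s' = 1) {c : ℝ} (hc0 : 0 ≤ c) (hc1 : c < 1) :
    IsUnit (1 - c • P).det := by
  rw [isUnit_iff_ne_zero]
  intro hdet
  obtain ⟨v, hv, hmv⟩ := (Matrix.exists_mulVec_eq_zero_iff).2 hdet
  obtain ⟨j0, hj0⟩ : ∃ j, v j ≠ 0 := Function.ne_iff.1 hv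
  have hne : (Finset.univ : Finset S).Nonempty := ⟨j0, mem_univ j0⟩
  obtain ⟨i, -, hi⟩ := Finset.exists_max_image Finset.univ (fun j => |v j|) hne
  have hvi : 0 < |v i| := lt_of_lt_of_le (abs_pos.2 hj0) (hi j0 (mem_univ j0))
  have hvm : v i = c * ∑ j, P i j * v j := by
    have := congrFun hmv i
    simp only [Matrix.mulVec, dotProduct, Matrix.sub_apply, Matrix.smul_apply,
      Matrix.one_apply, smul_eq_mul, Pi.zero_apply, sub_mul, ite_mul, one_mul, zero_mul,
      Finset.sum_sub_distrib, Finset.sum_ite_eq, mem_univ, if_true, ← Finset.mul_sum,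
      mul_assoc] at this
    linarith [this]
  have : |v i| ≤ c * |v i| := by
    calc |v i| = c * |∑ j, P i j * v j| := by rw [hvm, abs_mul, abs_of_nonneg hc0]
    _ ≤ c * ∑ j, |P i j * v j| := by
        exact mul_le_mul_of_nonneg_left (Finset.abs_sum_le_sum_abs _ _) hc0
    _ ≤ c * ∑ j, P i j * |v i| := by
        refine mul_le_mul_of_nonneg_left (Finset.sum_le_sum fun j _ => ?_) hc0
        rw [abs_mul, abs_of_nonneg (hP0 i j)]
        exact mul_le_mul_of_nonneg_left (hi j (mem_univ j)) (hP0 i j)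
    _ = c * |v i| := by rw [← Finset.sum_mul, hP1 i, one_mul]
  nlinarith

end aux


section aux2
variable {S : Type*} [Fintype S] [DecidableEq S]

lemma aux_inv_nonneg (P : Matrix S S ℝ) (hP0 : ∀ s s', 0 ≤ P s s')
    (hP1 : ∀ s, ∑ s', P s s' = 1) {c : ℝ} (hc0 : 0 ≤ c) (hc1 : c < 1)
    (hpn : ∀ n i j, 0 ≤ (P ^ n) i j) (hpr : ∀ n i, ∑ j, (P ^ n) i j = 1)
    (hdet : IsUnit (1 - c • P).det) (i j : S) :
    0 ≤ (1 - c • P)⁻¹ i j := by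
  set N := (1 - c • P)⁻¹ with hN
  have h1 : (1 - c • P) * N = 1 := Matrix.mul_nonsing_inv _ hdet
  have hgeom : ∀ n : ℕ, N = (∑ k ∈ Finset.range n, (c • P) ^ k) + (c • P) ^ n * N := by
    intro n
    have h := geom_sum_mul (c • P) n
    have h2 : (∑ k ∈ Finset.range n, (c • P) ^ k) * (1 - c • P) = 1 - (c • P) ^ n := by
      linear_combination (norm := noncomm_ring) -h
    have h3 := congrArg (· * N) h2
    simp only [sub_mul, one_mul, mul_assoc, h1, mul_one] at h3
    linear_combination (norm := noncomm_ring) -h3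
  set M : ℝ := ∑ a, ∑ b, |N a b| with hM
  have hMb : ∀ a b, |N a b| ≤ M := by
    intro a b
    have ha : |N a b| ≤ ∑ b', |N a b'| :=
      Finset.single_le_sum (f := fun b' => |N a b'|) (fun x _ => abs_nonneg _) (mem_univ b)
    have hb : (∑ b', |N a b'|) ≤ M :=
      Finset.single_le_sum (f := fun a' => ∑ b', |N a' b'|)
        (fun x _ => Finset.sum_nonneg fun y _ => abs_nonneg _) (mem_univ a)
    linarith
  have key : ∀ n : ℕ, -(c ^ n * M) ≤ N i j := by
    intro n
    have he := congrFun (congrFun (hgeom n) i) j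
    have hsum : 0 ≤ (∑ k ∈ Finset.range n, (c • P) ^ k) i j := by
      have : (∑ k ∈ Finset.range n, (c • P) ^ k) i j
          = ∑ k ∈ Finset.range n, c ^ k * (P ^ k) i j := by
        simp [Matrix.sum_apply, smul_pow]
      rw [this]
      exact Finset.sum_nonneg fun k _ => mul_nonneg (pow_nonneg hc0 k) (hpn k i j)
    have hbound : |((c • P) ^ n * N) i j| ≤ c ^ n * M := by
      have : ((c • P) ^ n * N) i j = c ^ n * ∑ k, (P ^ n) i k * N k j := by
        rw [smul_pow, Matrix.smul_mul, Matrix.smul_apply, Matrix.mul_apply]; simp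
      rw [this, abs_mul, abs_of_nonneg (pow_nonneg hc0 n)]
      refine mul_le_mul_of_nonneg_left ?_ (pow_nonneg hc0 n)
      calc |∑ k, (P ^ n) i k * N k j| ≤ ∑ k, |(P ^ n) i k * N k j| :=
            Finset.abs_sum_le_sum_abs _ _
      _ ≤ ∑ k, (P ^ n) i k * M := by
          refine Finset.sum_le_sum fun k _ => ?_
          rw [abs_mul, abs_of_nonneg (hpn n i k)]
          exact mul_le_mul_of_nonneg_left (hMb k j) (hpn n i k)
      _ = M := by rw [← Finset.sum_mul, hpr n i, one_mul]
    have : N i j = (∑ k ∈ Finset.range n, (c • P) ^ k) i j + ((c • P) ^ n * N) i j := by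
      rw [he]; simp [Matrix.add_apply]
    rw [this]
    have := neg_abs_le (((c • P) ^ n * N) i j)
    linarith
  by_contra hneg
  push_neg at hneg
  have hMpos : 0 < M := lt_of_lt_of_le (abs_pos.2 (ne_of_lt hneg)) (hMb i j)
  obtain ⟨n, hn⟩ := exists_pow_lt_of_lt_one (div_pos (neg_pos.2 hneg) hMpos) hc1
  have : c ^ n * M < -N i j := by
    rw [lt_div_iff₀ hMpos] at hn; linarith
  linarith [key n]

lemma aux_inv_rowsum (P : Matrix S S ℝ) (hP1 : ∀ s, ∑ s', P s s' = 1) {c : ℝ} (hc1 : c < 1)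
    (hdet : IsUnit (1 - c • P).det) (i : S) :
    ∑ j, (1 - c • P)⁻¹ i j = 1 / (1 - c) := by
  set N := (1 - c • P)⁻¹ with hN
  have h2 : N * (1 - c • P) = 1 := Matrix.nonsing_inv_mul _ hdet
  have hid : N = 1 + c • (N * P) := by
    have : N - c • (N * P) = 1 := by
      rw [← h2]; rw [mul_sub, mul_one, Matrix.mul_smul]
    linear_combination (norm := noncomm_ring) this
  have hrs : ∑ j, N i j = 1 + c * ∑ k, N i k := by
    conv_lhs => rw [hid]
    simp only [Matrix.add_apply, Matrix.smul_apply, Matrix.one_apply, Matrix.mul_apply,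
      smul_eq_mul]
    rw [Finset.sum_add_distrib]
    congr 1
    · simp
    · rw [← Finset.mul_sum, Finset.sum_comm]
      simp_rw [← Finset.mul_sum, hP1, mul_one]
  have h1c : (1 : ℝ) - c ≠ 0 := by linarith
  field_simp
  linarith [hrs]

lemma aux_inv_comm (P : Matrix S S ℝ) {c : ℝ} (hdet : IsUnit (1 - c • P).det) :
    P * (1 - c • P)⁻¹ = (1 - c • P)⁻¹ * P := by
  set N := (1 - c • P)⁻¹ with hN
  have h1 : (1 - c • P) * N = 1 := Matrix.mul_nonsing_inv _ hdet
  have h2 : N * (1 - c • P) = 1 := Matrix.nonsing_inv_mul _ hdet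
  have hc : P * (1 - c • P) = (1 - c • P) * P := by
    rw [mul_sub, sub_mul, mul_one, one_mul, Matrix.mul_smul, Matrix.smul_mul]
  calc P * N = (N * (1 - c • P)) * (P * N) := by rw [h2, one_mul]
  _ = N * ((P * (1 - c • P)) * N) := by rw [hc]; noncomm_ring
  _ = N * (P * ((1 - c • P) * N)) := by noncomm_ring
  _ = N * P := by rw [h1, mul_one]

end aux2


section aux3
variable {S : Type*} [Fintype S] [DecidableEq S]

lemma aux_mul_entry_nonneg (A B : Matrix S S ℝ) (hA : ∀ i j, 0 ≤ A i j)
    (hB : ∀ i j, 0 ≤ B i j) (i j : S) : 0 ≤ (A * B) i j := by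
  rw [Matrix.mul_apply]
  exact Finset.sum_nonneg fun k _ => mul_nonneg (hA i k) (hB k j)

end aux3

set_option maxHeartbeats 1000000 in
theorem stmt_18 {S : Type*} [Fintype S] [DecidableEq S]
    (P : Matrix S S ℝ) (hP0 : ∀ s s', 0 ≤ P s s') (hP1 : ∀ s, ∑ s', P s s' = 1)
    (hdiag : ∃ (B : Matrix S S ℂ) (d : S → ℂ), IsUnit B.det ∧
      P.map (algebraMap ℝ ℂ) = B * Matrix.diagonal d * B⁻¹)
    (dμ : S → ℝ) (hd0 : ∀ s, 0 < dμ s) (hd1 : ∑ s, dμ s = 1)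
    (lam : ℝ) (hlam : lam ∈ Set.Ico (0 : ℝ) 1)
    (β γ : ℝ) (hβ : β ∈ Set.Ioo (0 : ℝ) 1) (hγ : γ ∈ Set.Ioo (0 : ℝ) 1)
    (hβγ : γ ≤ β)
    (Plβ : Matrix S S ℝ) (hPlβ : Plβ = 1 - (1 - (lam * β) • P)⁻¹ * (1 - β • P))
    (Plγ : Matrix S S ℝ) (hPlγ : Plγ = 1 - (1 - (lam * γ) • P)⁻¹ * (1 - γ • P))
    (m : S → ℝ) (hm : m = Matrix.vecMul dμ (1 - Plβ)⁻¹)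
    (R : S → ℝ)
    (T : (S → ℝ) → (S → ℝ))
    (hT : ∀ v, T v = (1 - (γ * lam) • P)⁻¹.mulVec R + Plγ.mulVec v)
    (v₁ v₂ : S → ℝ) :
    ∑ s, m s * (T v₁ s - T v₂ s) ^ 2 ≤
      (γ ^ 2 * (1 + lam * β) ^ 2 * (1 - lam)) /
          (β * (1 + γ * lam) ^ 2 * (1 - lam * β)) *
        ∑ s, m s * (v₁ s - v₂ s) ^ 2 := by
  obtain ⟨hlam0, hlam1⟩ := hlam
  obtain ⟨hβ0, hβ1⟩ := hβ
  obtain ⟨hγ0, hγ1⟩ := hγ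
  have hpn := aux_pow_nonneg P hP0
  have hpr := aux_pow_rowsum P hP1
  -- scalars
  have hlb0 : 0 ≤ lam * β := by positivity
  have hlb1 : lam * β < 1 := by nlinarith
  have hlg0 : 0 ≤ lam * γ := by positivity
  have hlg1 : lam * γ < 1 := by nlinarith
  -- determinants
  have hdβ : IsUnit (1 - β • P).det := aux_unit_det P hP0 hP1 (le_of_lt hβ0) hβ1
  have hdlb : IsUnit (1 - (lam * β) • P).det := aux_unit_det P hP0 hP1 hlb0 hlb1
  have hdlg : IsUnit (1 - (lam * γ) • P).det := aux_unit_det P hP0 hP1 hlg0 hlg1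
  set Nβ := (1 - β • P)⁻¹ with hNβdef
  set Nlb := (1 - (lam * β) • P)⁻¹ with hNlbdef
  set Nlg := (1 - (lam * γ) • P)⁻¹ with hNlgdef
  have hNβ0 : ∀ i j, 0 ≤ Nβ i j :=
    aux_inv_nonneg P hP0 hP1 (le_of_lt hβ0) hβ1 hpn hpr hdβ
  have hNγ0 : ∀ i j, 0 ≤ Nlg i j := aux_inv_nonneg P hP0 hP1 hlg0 hlg1 hpn hpr hdlg
  have hNγrs : ∀ i, ∑ j, Nlg i j = 1 / (1 - lam * γ) :=
    aux_inv_rowsum P hP1 hlg1 hdlg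
  -- basic inverse identities
  have eγ : Nlg * (1 - (lam * γ) • P) = 1 := Matrix.nonsing_inv_mul _ hdlg
  have eγ' : (1 - (lam * γ) • P) * Nlg = 1 := Matrix.mul_nonsing_inv _ hdlg
  have eβ : Nβ * (1 - β • P) = 1 := Matrix.nonsing_inv_mul _ hdβ
  have eβ' : (1 - β • P) * Nβ = 1 := Matrix.mul_nonsing_inv _ hdβ
  have elb : Nlb * (1 - (lam * β) • P) = 1 := Matrix.nonsing_inv_mul _ hdlb
  have hNgid : Nlg - (lam * γ) • (Nlg * P) = 1 := by
    rw [← eγ, mul_sub, mul_one, Matrix.mul_smul]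
  have hNbid : Nβ - β • (Nβ * P) = 1 := by
    rw [← eβ, mul_sub, mul_one, Matrix.mul_smul]
  -- Plγ structure
  have hPg : Plγ = (γ - lam * γ) • (Nlg * P) := by
    rw [hPlγ, mul_sub, mul_one, Matrix.mul_smul, ← hNgid]
    module
  have hPg0 : ∀ i j, 0 ≤ Plγ i j := by
    intro i j
    rw [hPg, Matrix.smul_apply, smul_eq_mul]
    have h1 : 0 ≤ (Nlg * P) i j := aux_mul_entry_nonneg _ _ hNγ0 hP0 i j
    exact mul_nonneg (by nlinarith [mul_nonneg (sub_nonneg.2 (le_of_lt hlam1)) (le_of_lt hγ0)]) h1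
  set ζ : ℝ := (γ - lam * γ) / (1 - lam * γ) with hζdef
  have hζ0 : 0 ≤ ζ :=
    div_nonneg (by nlinarith [mul_nonneg (sub_nonneg.2 (le_of_lt hlam1)) (le_of_lt hγ0)])
      (by linarith)
  have hPgrs : ∀ i, ∑ j, Plγ i j = ζ := by
    intro i
    rw [hPg]
    simp only [Matrix.smul_apply, smul_eq_mul, ← Finset.mul_sum]
    have : ∑ j, (Nlg * P) i j = 1 / (1 - lam * γ) := by
      simp only [Matrix.mul_apply]
      rw [Finset.sum_comm]
      simp_rw [← Finset.mul_sum, hP1, mul_one, hNγrs i]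
    rw [this, hζdef]
    field_simp
  -- E = (1 - Plβ)⁻¹
  set E := (1 - Plβ)⁻¹ with hEdef
  have h1mPlβ : 1 - Plβ = Nlb * (1 - β • P) := by rw [hPlβ, sub_sub_cancel]
  have hEeq : E = Nβ * (1 - (lam * β) • P) := by
    rw [hEdef, h1mPlβ]
    apply Matrix.inv_eq_right_inv
    have : Nlb * (1 - β • P) * (Nβ * (1 - (lam * β) • P))
        = Nlb * (((1 - β • P) * Nβ) * (1 - (lam * β) • P)) := by noncomm_ring
    rw [this, eβ', one_mul, elb]
  have hE2 : E = 1 + (β - lam * β) • (Nβ * P) := by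
    rw [hEeq, mul_sub, mul_one, Matrix.mul_smul, ← hNbid]
    module
  have hE0 : ∀ i j, 0 ≤ E i j := by
    intro i j
    rw [hE2, Matrix.add_apply, Matrix.smul_apply, Matrix.one_apply, smul_eq_mul]
    have h1 : 0 ≤ (Nβ * P) i j := aux_mul_entry_nonneg _ _ hNβ0 hP0 i j
    have h2 : (0:ℝ) ≤ if i = j then 1 else 0 := by positivity
    have h4 : 0 ≤ (β - lam * β) * ((Nβ * P) i j) :=
      mul_nonneg (by nlinarith [mul_nonneg (le_of_lt hβ0) (sub_nonneg.2 (le_of_lt hlam1))]) h1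
    linarith
  have hm0 : ∀ j, 0 ≤ m j := by
    intro j
    rw [hm]
    simp only [Matrix.vecMul, dotProduct]
    exact Finset.sum_nonneg fun i _ => mul_nonneg (le_of_lt (hd0 i)) (hE0 i j)
  -- commutation facts
  have hcomm : P * Nlg = Nlg * P := aux_inv_comm P hdlg
  have hcommlb : (1 - (lam * β) • P) * Nlg = Nlg * (1 - (lam * β) • P) := by
    rw [sub_mul, mul_sub, one_mul, mul_one, Matrix.smul_mul, Matrix.mul_smul, hcomm]
  have hcommβ : (1 - β • P) * Nlg = Nlg * (1 - β • P) := by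
    rw [sub_mul, mul_sub, one_mul, mul_one, Matrix.smul_mul, Matrix.mul_smul, hcomm]
  -- the key matrix identity
  set c₂ : ℝ := lam * γ + β - lam * β with hc₂def
  have hpoly : (1 - (lam * β) • P) * (1 - c₂ • P)
      = (1 - β • P) * (1 - (lam * γ) • P) + (lam * (1 - lam) * (β - γ) * β) • (P * P) := by
    simp only [mul_sub, sub_mul, mul_one, one_mul, Matrix.mul_smul, Matrix.smul_mul,
      smul_smul]
    match_scalars <;> ring
  have hstepA : (γ / β) • (1 : Matrix S S ℝ) - Plγ = (γ / β) • (Nlg * (1 - c₂ • P)) := by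
    rw [hPg, mul_sub, mul_one, Matrix.mul_smul, ← hNgid]
    match_scalars <;> (field_simp; try ring)
  have hβne : (β : ℝ) ≠ 0 := ne_of_gt hβ0
  have hG : E * ((γ / β) • (1 : Matrix S S ℝ) - Plγ)
      = (γ / β) • ((1 : Matrix S S ℝ)
          + (lam * (1 - lam) * (β - γ) * β) • (Nβ * Nlg * (P * P))) := by
    rw [hstepA, hEeq, Matrix.mul_smul]
    congr 1
    calc Nβ * (1 - (lam * β) • P) * (Nlg * (1 - c₂ • P))
        = Nβ * (((1 - (lam * β) • P) * Nlg) * (1 - c₂ • P)) := by noncomm_ring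
      _ = Nβ * Nlg * ((1 - (lam * β) • P) * (1 - c₂ • P)) := by rw [hcommlb]; noncomm_ring
      _ = Nβ * Nlg * ((1 - β • P) * (1 - (lam * γ) • P))
            + (lam * (1 - lam) * (β - γ) * β) • (Nβ * Nlg * (P * P)) := by
          rw [hpoly, mul_add, Matrix.mul_smul]
      _ = 1 + (lam * (1 - lam) * (β - γ) * β) • (Nβ * Nlg * (P * P)) := by
          congr 1
          calc Nβ * Nlg * ((1 - β • P) * (1 - (lam * γ) • P))
              = Nβ * ((Nlg * (1 - β • P)) * (1 - (lam * γ) • P)) := by noncomm_ring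
            _ = (Nβ * (1 - β • P)) * (Nlg * (1 - (lam * γ) • P)) := by
                rw [← hcommβ]; noncomm_ring
            _ = 1 := by rw [eβ, eγ, one_mul]
  -- key vector inequality : vecMul m Plγ ≤ (γ/β) m
  have hκ0 : 0 ≤ lam * (1 - lam) * (β - γ) * β :=
    mul_nonneg (mul_nonneg (mul_nonneg hlam0 (by linarith)) (by linarith)) (le_of_lt hβ0)
  have hG0 : ∀ i j, 0 ≤ (E * ((γ / β) • (1 : Matrix S S ℝ) - Plγ)) i j := by
    intro i j
    rw [hG]
    simp only [Matrix.smul_apply, Matrix.add_apply, Matrix.one_apply, smul_eq_mul]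
    have h1 : 0 ≤ (Nβ * Nlg * (P * P)) i j :=
      aux_mul_entry_nonneg _ _ (aux_mul_entry_nonneg _ _ hNβ0 hNγ0)
        (aux_mul_entry_nonneg _ _ hP0 hP0) i j
    have h2 : (0:ℝ) ≤ if i = j then 1 else 0 := by positivity
    have h3 : 0 ≤ γ / β := by positivity
    have h4 : 0 ≤ lam * (1 - lam) * (β - γ) * β * ((Nβ * Nlg * (P * P)) i j) :=
      mul_nonneg hκ0 h1
    nlinarith [mul_nonneg h3 (add_nonneg h2 h4)]
  have h5 : ∀ j, Matrix.vecMul m Plγ j ≤ (γ / β) * m j := by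
    intro j
    have hv : Matrix.vecMul m ((γ / β) • (1 : Matrix S S ℝ) - Plγ) j
        = Matrix.vecMul dμ (E * ((γ / β) • (1 : Matrix S S ℝ) - Plγ)) j := by
      rw [hm, Matrix.vecMul_vecMul]
    have hv0 : 0 ≤ Matrix.vecMul m ((γ / β) • (1 : Matrix S S ℝ) - Plγ) j := by
      rw [hv]
      simp only [Matrix.vecMul, dotProduct]
      exact Finset.sum_nonneg fun i _ => mul_nonneg (le_of_lt (hd0 i)) (hG0 i j)
    have hexp : Matrix.vecMul m ((γ / β) • (1 : Matrix S S ℝ) - Plγ) j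
        = (γ / β) * m j - Matrix.vecMul m Plγ j := by
      simp only [Matrix.vecMul, dotProduct, Matrix.sub_apply, Matrix.smul_apply,
        Matrix.one_apply, smul_eq_mul, mul_sub, Finset.sum_sub_distrib, mul_ite, mul_one,
        mul_zero]
      rw [Finset.sum_ite_eq' Finset.univ j (fun i => m i * (γ / β))]
      simp [mul_comm]
    linarith [hv0, hexp ▸ hv0]
  -- pointwise Cauchy-Schwarz
  set w : S → ℝ := fun s => v₁ s - v₂ s with hwdef
  have hTw : ∀ s, T v₁ s - T v₂ s = Plγ.mulVec w s := by
    intro s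
    rw [hT, hT]
    simp only [Pi.add_apply, Matrix.mulVec, dotProduct, hwdef, mul_sub,
      Finset.sum_sub_distrib]
    ring
  have hCS : ∀ s, (Plγ.mulVec w s) ^ 2 ≤ ζ * ∑ j, Plγ s j * (w j) ^ 2 := by
    intro s
    have h := Finset.sum_sq_le_sum_mul_sum_of_sq_eq_mul Finset.univ
      (r := fun j => Plγ s j * w j) (f := fun j => Plγ s j)
      (g := fun j => Plγ s j * (w j) ^ 2)
      (fun j _ => hPg0 s j) (fun j _ => mul_nonneg (hPg0 s j) (sq_nonneg _))
      (fun j _ => by ring)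
    rw [hPgrs s] at h
    simpa [Matrix.mulVec, dotProduct] using h
  -- main chain
  have hchain : ∑ s, m s * (Plγ.mulVec w s) ^ 2 ≤ ζ * (γ / β) * ∑ j, m j * (w j) ^ 2 := by
    calc ∑ s, m s * (Plγ.mulVec w s) ^ 2
        ≤ ∑ s, m s * (ζ * ∑ j, Plγ s j * (w j) ^ 2) := by
          exact Finset.sum_le_sum fun s _ =>
            mul_le_mul_of_nonneg_left (hCS s) (hm0 s)
      _ = ζ * ∑ j, (Matrix.vecMul m Plγ j) * (w j) ^ 2 := by
          simp only [Matrix.vecMul, dotProduct, Finset.sum_mul, Finset.mul_sum]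
          rw [Finset.sum_comm]
          exact Finset.sum_congr rfl fun s _ => Finset.sum_congr rfl fun j _ => by ring
      _ ≤ ζ * ∑ j, ((γ / β) * m j) * (w j) ^ 2 := by
          apply mul_le_mul_of_nonneg_left _ hζ0
          exact Finset.sum_le_sum fun j _ =>
            mul_le_mul_of_nonneg_right (h5 j) (sq_nonneg _)
      _ = ζ * (γ / β) * ∑ j, m j * (w j) ^ 2 := by
          rw [mul_assoc]
          congr 1
          rw [Finset.mul_sum]
          exact Finset.sum_congr rfl fun j _ => by ring
  have hw0 : 0 ≤ ∑ j, m j * (w j) ^ 2 :=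
    Finset.sum_nonneg fun j _ => mul_nonneg (hm0 j) (sq_nonneg _)
  have hconst : ζ * (γ / β) ≤ (γ ^ 2 * (1 + lam * β) ^ 2 * (1 - lam)) /
      (β * (1 + γ * lam) ^ 2 * (1 - lam * β)) := by
    have hb1 : lam ^ 2 * β * γ ≤ 1 := by
      nlinarith [mul_nonneg hlam0 hlam0, mul_pos hβ0 hγ0,
        mul_nonneg (mul_nonneg hlam0 hlam0) (le_of_lt hβ0),
        mul_nonneg (mul_nonneg (mul_nonneg hlam0 hlam0) (le_of_lt hβ0)) (le_of_lt hγ0)]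
    have hb2 : 0 ≤ lam * (β + γ) := mul_nonneg hlam0 (by linarith)
    have h3' : 0 ≤ 3 + lam * (β + γ) - lam ^ 2 * β * γ := by linarith
    have hprod : 0 ≤ (γ ^ 2 * (1 - lam) * β) * (lam * (β - γ))
        * (3 + lam * (β + γ) - lam ^ 2 * β * γ) :=
      mul_nonneg (mul_nonneg
        (mul_nonneg (mul_nonneg (sq_nonneg γ) (by linarith)) (le_of_lt hβ0))
        (mul_nonneg hlam0 (by linarith))) h3'
    have hd1' : (0:ℝ) < (1 - lam * γ) * β := by nlinarith
    have hq : (0:ℝ) < 1 + γ * lam := by nlinarith [mul_nonneg (le_of_lt hγ0) hlam0]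
    have hd2' : (0:ℝ) < β * (1 + γ * lam) ^ 2 * (1 - lam * β) :=
      mul_pos (mul_pos hβ0 (pow_pos hq 2)) (by linarith)
    rw [hζdef, div_mul_div_comm, div_le_div_iff₀ hd1' hd2']
    nlinarith [hprod]
  calc ∑ s, m s * (T v₁ s - T v₂ s) ^ 2 = ∑ s, m s * (Plγ.mulVec w s) ^ 2 :=
        Finset.sum_congr rfl fun s _ => by rw [hTw s]
    _ ≤ ζ * (γ / β) * ∑ j, m j * (w j) ^ 2 := hchain
    _ ≤ (γ ^ 2 * (1 + lam * β) ^ 2 * (1 - lam)) /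
          (β * (1 + γ * lam) ^ 2 * (1 - lam * β)) * ∑ j, m j * (w j) ^ 2 :=
        mul_le_mul_of_nonneg_right hconst hw0
    _ = _ := by rw [hwdef]
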